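/- arXiv:1507.03556 — 6 statements merged into one kernel-verified Lean document; each statement's English description precedes it below -/
import Mathlib

section
/- Let c ≥ 1 be an integer and let ε > 0 be a constant such that every continuous ε-light map from [0,1]^c to ℝ^c has a stable value. Let {U_α}_{α ∈ A} be a covering of [0,1]^c by open subsets of [0,1]^c with diam(U_α) < ε for every α ∈ A. Let f : [0,1]^c → ℝ^c be a continuous map such that for every x ∈ [0,1]^c there exists a nonempty subset I ⊆ A with: (1) x ∈ U_α for every α ∈ I, and (2) ⋂_{α ∈ I} f(∂U_α) = ∅, where ∂U_α denotes the frontier of U_α in [0,1]^c. Then f has a stable value. -/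
/-- A point `y` is a *stable value* of the continuous map `f : X → Y` if there is `ε > 0`
such that `y` is in the range of every continuous map `g` that is pointwise `ε`-close to `f`. -/
def IsStableValue {X Y : Type*} [MetricSpace X] [MetricSpace Y] (f : X → Y) (y : Y) : Prop :=
  ∃ ε > (0 : ℝ), ∀ g : X → Y, Continuous g → (∀ x, dist (f x) (g x) < ε) → y ∈ Set.range g

/-- A map `f : X → Y` is *`ε`-light* if for every `y ∈ Y` every connected component of the
fiber `f⁻¹ {y}` has diameter strictly less than `ε`. -/
def IsLightMap {X Y : Type*} [MetricSpace X] [MetricSpace Y] (f : X → Y) (ε : ℝ) : Prop :=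
  ∀ (y : Y), ∀ x ∈ f ⁻¹' {y},
    EMetric.diam (connectedComponentIn (f ⁻¹' {y}) x) < ENNReal.ofReal ε

/-- The unit cube `[0,1]^c` in `ℝ^c`, as a metric space. -/
abbrev UnitCube (c : ℕ) : Type :=
  {x : EuclideanSpace ℝ (Fin c) // ∀ i, x i ∈ Set.Icc (0 : ℝ) 1}

/-- If every continuous `ε`-light map `[0,1]^c → ℝ^c` has a stable value, and `{U_α}` is an
open covering of `[0,1]^c` by sets of diameter `< ε` such that every point `x` admits a
nonempty collection `I` of indices with `x ∈ U_α` for all `α ∈ I` and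
`⋂_{α ∈ I} f(∂U_α) = ∅`, then the continuous map `f` has a stable value. -/
theorem stmt1 (c : ℕ) (hc : 1 ≤ c) (ε : ℝ) (hε : 0 < ε)
    (hlight : ∀ g : UnitCube c → EuclideanSpace ℝ (Fin c),
      Continuous g → IsLightMap g ε → ∃ y, IsStableValue g y)
    {A : Type*} (U : A → Set (UnitCube c))
    (hUopen : ∀ α, IsOpen (U α))
    (hUdiam : ∀ α, EMetric.diam (U α) < ENNReal.ofReal ε)
    (hUcover : ∀ x : UnitCube c, ∃ α, x ∈ U α)
    (f : UnitCube c → EuclideanSpace ℝ (Fin c)) (hf : Continuous f)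
    (hI : ∀ x : UnitCube c, ∃ I : Set A, I.Nonempty ∧ (∀ α ∈ I, x ∈ U α) ∧
      (⋂ α ∈ I, f '' frontier (U α)) = ∅) :
    ∃ y, IsStableValue f y := by
  apply hlight f hf
  intro y x hx
  obtain ⟨I, hIne, hIx, hIempty⟩ := hI x
  -- find α ∈ I with y ∉ f '' frontier (U α)
  have : ∃ α ∈ I, y ∉ f '' frontier (U α) := by
    by_contra h
    push_neg at h
    have : y ∈ ⋂ α ∈ I, f '' frontier (U α) := by
      simp only [Set.mem_iInter]; exact h
    rw [hIempty] at this
    exact this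
  obtain ⟨α, hαI, hαy⟩ := this
  have hfib : f ⁻¹' {y} ⊆ U α ∪ (closure (U α))ᶜ := by
    intro z hz
    by_cases hcl : z ∈ closure (U α)
    · left
      by_contra hzU
      exact hαy ⟨z, ⟨hcl, by rwa [(hUopen α).interior_eq]⟩, hz⟩
    · right; exact hcl
  have hsub : connectedComponentIn (f ⁻¹' {y}) x ⊆ U α := by
    apply IsPreconnected.subset_left_of_subset_union (hUopen α)
      (isClosed_closure.isOpen_compl)
      (Set.disjoint_compl_right_iff_subset.mpr subset_closure)
      ((connectedComponentIn_subset _ _).trans hfib)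
      ⟨x, mem_connectedComponentIn hx, hIx α hαI⟩
      (isPreconnected_connectedComponentIn)
  exact lt_of_le_of_lt (EMetric.diam_mono hsub) (hUdiam α)
end

section
/- Let X and Y be metric spaces, f : X → Y a continuous map, and ε > 0. Suppose that for every x ∈ X there exists an open set U ⊆ X with x ∈ U, diam(U) < ε, and f(x) ∉ f(∂U), where ∂U denotes the frontier of U. Then f is ε-light, i.e., for every y ∈ Y every connected component of f⁻¹({y}) has diameter strictly less than ε. -/
/-- If every point `x` lies in an open set `U` of diameter `< ε` with `f x ∉ f(∂U)`,
then the continuous map `f` is `ε`-light. -/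
theorem stmt3 {X Y : Type*} [MetricSpace X] [MetricSpace Y]
    (f : X → Y) (hf : Continuous f) (ε : ℝ) (hε : 0 < ε)
    (h : ∀ x : X, ∃ U : Set X, IsOpen U ∧ x ∈ U ∧ EMetric.diam U < ENNReal.ofReal ε ∧
      f x ∉ f '' frontier U) :
    IsLightMap f ε := by
  intro y x hx
  obtain ⟨U, hU, hxU, hdiam, hfr⟩ := h x
  set C := connectedComponentIn (f ⁻¹' {y}) x with hC
  have hCsub : C ⊆ f ⁻¹' {y} := connectedComponentIn_subset _ _
  have hxC : x ∈ C := mem_connectedComponentIn hx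
  have hconn : IsPreconnected C :=
    (isConnected_connectedComponentIn_iff.mpr hx).isPreconnected
  -- C avoids frontier U
  have hdisj : ∀ z ∈ C, z ∉ frontier U := by
    intro z hz hzf
    have : f z = y := hCsub hz
    have hfx : f x = y := hx
    exact hfr ⟨z, hzf, by rw [this, hfx]⟩
  have hsubU : C ⊆ U := by
    have hcover : C ⊆ U ∪ (closure U)ᶜ := by
      intro z hz
      by_cases hzU : z ∈ U
      · exact Or.inl hzU
      · refine Or.inr fun hzc => hdisj z hz ?_
        rw [hU.frontier_eq]
        exact ⟨hzc, hzU⟩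
    have hdisj2 : U ∩ (closure U)ᶜ ∩ C = ∅ := by
      ext z
      simp only [Set.mem_inter_iff, Set.mem_compl_iff, Set.mem_empty_iff_false, iff_false]
      rintro ⟨⟨h1, h2⟩, _⟩
      exact h2 (subset_closure h1)
    have hdj : Disjoint U (closure U)ᶜ := by
      rw [Set.disjoint_iff_inter_eq_empty]
      exact Set.eq_empty_of_forall_notMem fun z ⟨h1, h2⟩ => h2 (subset_closure h1)
    exact hconn.subset_left_of_subset_union hU isClosed_closure.isOpen_compl hdj
      hcover ⟨x, hxC, hxU⟩
  exact lt_of_le_of_lt (EMetric.diam_mono hsubU) hdiam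
end

section
/- Let V be a finite-dimensional real inner product space and A : V → V an invertible linear map for which there exist constants 0 < m ≤ M with m‖v‖ ≤ ‖A v‖ ≤ M‖v‖ for all v ∈ V. Let E ⊆ V be a linear subspace, let E^⊥ denote its orthogonal complement, and let φ : E → E^⊥ be a linear map. Define ψ : A(E) → (A(E))^⊥ by ψ(u) = P_{(A(E))^⊥}(A(φ(A⁻¹u))) for u ∈ A(E), where P_{(A(E))^⊥} is the orthogonal projection of V onto (A(E))^⊥. Then (m/M)·‖φ‖ ≤ ‖ψ‖ ≤ (M/m)·‖φ‖, where ‖·‖ denotes the operator norm. -/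
/-!
`ψ` is the map induced by `A` on graphs over `E`: the graph of `ψ` is the image under `A`
of the graph of `φ`. Since the projection onto `(A E)ᗮ` is a contraction,
`‖ψ‖ ≤ ‖A‖ ‖A⁻¹‖ ‖φ‖`. Conversely `A⁻¹` maps the graph of `ψ` back onto the graph of `φ`,
so `φ` is obtained from `ψ` by the same construction with `A⁻¹`, and the same estimate gives
the lower bound.
-/

open Submodule

section

variable {V : Type*} [NormedAddCommGroup V] [InnerProductSpace ℝ V]

theorem opNorm_le_mul_mul_of_eq_orthogonalProjectionOnto {E F : Submodule ℝ V}
    [F.HasOrthogonalProjection] (A B : V → V) {K L : ℝ} (hK : 0 ≤ K) (hL : 0 ≤ L)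
    (hA : ∀ v, ‖A v‖ ≤ K * ‖v‖) (hB : ∀ v, ‖B v‖ ≤ L * ‖v‖) (hBF : ∀ u ∈ F, B u ∈ E)
    (φ : E →L[ℝ] Eᗮ) (ψ : F →L[ℝ] Fᗮ)
    (hψ : ∀ u : F,
      (ψ u : V) = Fᗮ.orthogonalProjectionOnto (A (φ ⟨B u, hBF u u.2⟩))) :
    ‖ψ‖ ≤ K * L * ‖φ‖ := by
  refine ψ.opNorm_le_bound (by positivity) fun u ↦ ?_
  calc ‖ψ u‖ = ‖Fᗮ.orthogonalProjectionOnto (A (φ ⟨B u, hBF u u.2⟩))‖ := by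
        rw [← norm_coe, hψ, norm_coe]
    _ ≤ ‖A (φ ⟨B u, hBF u u.2⟩)‖ := norm_orthogonalProjectionOnto_apply_le _ _
    _ ≤ K * ‖φ ⟨B u, hBF u u.2⟩‖ := hA _
    _ ≤ K * (‖φ‖ * ‖B u‖) := by gcongr; exact φ.le_opNorm _
    _ ≤ K * (‖φ‖ * (L * ‖u‖)) := by gcongr; exact hB u
    _ = K * L * ‖φ‖ * ‖u‖ := by ring

theorem orthogonalProjectionOnto_symm_orthogonalProjectionOnto_map (A : V ≃ₗ[ℝ] V)
    (E : Submodule ℝ V) [E.HasOrthogonalProjection]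
    [(E.map (A : V →ₗ[ℝ] V)).HasOrthogonalProjection] (x : Eᗮ) :
    (Eᗮ.orthogonalProjectionOnto
      (A.symm ((E.map (A : V →ₗ[ℝ] V))ᗮ.orthogonalProjectionOnto (A x))) : V) = x := by
  set F := E.map (A : V →ₗ[ℝ] V)
  have hE : A.symm (F.orthogonalProjectionOnto (A x)) ∈ E := by
    obtain ⟨e, he, hAe⟩ := (F.orthogonalProjectionOnto (A x)).2
    rw [← hAe, LinearEquiv.coe_coe, A.symm_apply_apply]
    exact he
  have hdecomp :
      (Fᗮ.orthogonalProjectionOnto (A x) : V) = A x - F.orthogonalProjectionOnto (A x) :=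
    starProjection_orthogonal_val (A x)
  rw [hdecomp, map_sub, A.symm_apply_apply, map_sub, orthogonalProjectionOnto_mem_subspace_eq_self,
    orthogonalProjectionOnto_apply_of_mem_orthogonal (E.le_orthogonal_orthogonal hE)]
  simp

theorem norm_symm_le_inv_mul (A : V ≃ₗ[ℝ] V) {m : ℝ} (hm : 0 < m)
    (hlow : ∀ v, m * ‖v‖ ≤ ‖A v‖) (v : V) : ‖A.symm v‖ ≤ m⁻¹ * ‖v‖ := by
  rw [inv_mul_eq_div, le_div_iff₀' hm]
  simpa using hlow (A.symm v)

end

/-- Let `A : V ≃ V` be an invertible linear map with `m‖v‖ ≤ ‖A v‖ ≤ M‖v‖`, let `E` be a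
subspace, `φ : E → E^⊥` linear, and let `ψ : A(E) → (A(E))^⊥` be defined by
`ψ u = P_{(A(E))^⊥}(A (φ (A⁻¹ u)))`.  Then `(m/M)‖φ‖ ≤ ‖ψ‖ ≤ (M/m)‖φ‖`. -/
theorem stmt4 {V : Type*} [NormedAddCommGroup V] [InnerProductSpace ℝ V]
    [FiniteDimensional ℝ V]
    (A : V ≃ₗ[ℝ] V) (m M : ℝ) (hm : 0 < m) (hmM : m ≤ M)
    (hlow : ∀ v : V, m * ‖v‖ ≤ ‖A v‖) (hup : ∀ v : V, ‖A v‖ ≤ M * ‖v‖)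
    (E : Submodule ℝ V) (φ : E →L[ℝ] Eᗮ)
    (ψ : (E.map (A : V →ₗ[ℝ] V)) →L[ℝ] (E.map (A : V →ₗ[ℝ] V))ᗮ)
    (hψ : ∀ (u : E.map (A : V →ₗ[ℝ] V)) (hu : A.symm (u : V) ∈ E),
      (ψ u : V) =
        (orthogonalProjection (E.map (A : V →ₗ[ℝ] V))ᗮ (A ((φ ⟨A.symm (u : V), hu⟩ : V))) : V)) :
    (m / M) * ‖φ‖ ≤ ‖ψ‖ ∧ ‖ψ‖ ≤ (M / m) * ‖φ‖ := by
  have hM : 0 < M := hm.trans_le hmM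
  have hsymm := norm_symm_le_inv_mul A hm hlow
  have hAE : ∀ u ∈ E.map (A : V →ₗ[ℝ] V), A.symm u ∈ E := by
    rintro _ ⟨e, he, rfl⟩
    simpa using he
  have hφ : ∀ e : E, (φ e : V) = Eᗮ.orthogonalProjectionOnto
      (A.symm (ψ ⟨A e, mem_map_of_mem e.2⟩)) := fun e ↦ by
    rw [hψ _ (hAE _ (mem_map_of_mem e.2)),
      ← orthogonalProjectionOnto_symm_orthogonalProjectionOnto_map A E (φ e)]
    simp
  have hφ_le := opNorm_le_mul_mul_of_eq_orthogonalProjectionOnto A.symm A (inv_nonneg.2 hm.le)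
    hM.le hsymm hup (fun _ ↦ mem_map_of_mem) ψ φ hφ
  have hψ_le := opNorm_le_mul_mul_of_eq_orthogonalProjectionOnto A A.symm hM.le
    (inv_nonneg.2 hm.le) hup hsymm hAE φ ψ (fun u ↦ hψ u _)
  constructor
  · rw [div_mul_eq_mul_div, div_le_iff₀ hM]
    calc m * ‖φ‖ ≤ m * (m⁻¹ * M * ‖ψ‖) := by gcongr
      _ = ‖ψ‖ * M := by field_simp
  · simpa [div_eq_mul_inv] using hψ_le
end

section
/- Let (Ω, ℙ) be a probability space and let X : Ω → ℝ be a measurable function such that a ≤ X ≤ b almost everywhere for some constants 0 < a ≤ b, and such that ∫ log X dℙ < −κ for some real number κ. Then there exists σ₀ > 0 such that for every σ ∈ (0, σ₀], ∫ X^σ dℙ < e^{−σκ}. -/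
/-!
Write `X ^ σ = exp (σ log X)`. Since `log X` takes values in `[log a, log b]`, Hoeffding's lemma
bounds its moment generating function by `exp (σ 𝔼[log X] + c σ²)` with
`c = (log b - log a)² / 8`, and `σ 𝔼[log X] + c σ² < -σκ`
as soon as `c σ < -κ - 𝔼[log X]`.
-/

open MeasureTheory Real

namespace ProbabilityTheory

lemma integral_rpow_eq_mgf_log {Ω : Type*} [MeasurableSpace Ω] {μ : Measure Ω}
    {X : Ω → ℝ} (hpos : ∀ᵐ ω ∂μ, 0 < X ω) (σ : ℝ) :
    ∫ ω, X ω ^ σ ∂μ = mgf (fun ω ↦ log (X ω)) μ σ := by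
  refine integral_congr_ae ?_
  filter_upwards [hpos] with ω hω
  rw [rpow_def_of_pos hω, mul_comm]

section Bounded

variable {Ω : Type*} [MeasurableSpace Ω] {μ : Measure Ω} [IsProbabilityMeasure μ] {X : Ω → ℝ}

lemma mgf_le_exp_integral_add_of_mem_Icc {a b : ℝ} (hm : AEMeasurable X μ)
    (hb : ∀ᵐ ω ∂μ, X ω ∈ Set.Icc a b) (t : ℝ) :
    mgf X μ t ≤ exp (t * μ[X] + (‖b - a‖₊ / 2) ^ 2 * t ^ 2 / 2) := by
  calc mgf X μ t = mgf (fun ω ↦ (X ω - μ[X]) + μ[X]) μ t := by simp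
    _ = mgf (fun ω ↦ X ω - μ[X]) μ t * exp (t * μ[X]) := mgf_add_const _
    _ ≤ exp ((‖b - a‖₊ / 2) ^ 2 * t ^ 2 / 2) * exp (t * μ[X]) := by
      gcongr
      exact (hasSubgaussianMGF_of_mem_Icc hm hb).mgf_le t
    _ = exp (t * μ[X] + (‖b - a‖₊ / 2) ^ 2 * t ^ 2 / 2) := by rw [← exp_add, add_comm]

lemma exists_mgf_lt_exp_of_integral_lt {a b κ : ℝ} (hm : AEMeasurable X μ)
    (hb : ∀ᵐ ω ∂μ, X ω ∈ Set.Icc a b) (hκ : μ[X] < -κ) :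
    ∃ σ₀ > (0 : ℝ), ∀ σ : ℝ, 0 < σ → σ ≤ σ₀ → mgf X μ σ < exp (-σ * κ) := by
  set c : ℝ := (‖b - a‖₊ / 2) ^ 2
  have hc : 0 ≤ c := by positivity
  set δ := -κ - μ[X]
  have hδ : 0 < δ := sub_pos.mpr hκ
  refine ⟨δ / (c + 1), by positivity, fun σ hσ hσσ₀ ↦ ?_⟩
  have hcσ : c * σ < δ := by
    rw [le_div_iff₀ (by positivity)] at hσσ₀
    nlinarith
  calc mgf X μ σ ≤ exp (σ * μ[X] + c * σ ^ 2 / 2) := mgf_le_exp_integral_add_of_mem_Icc hm hb σ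
    _ < exp (-σ * κ) := by
      rw [exp_lt_exp]
      nlinarith

end Bounded

end ProbabilityTheory

theorem stmt5_general {Ω : Type*} [MeasurableSpace Ω] (ℙ : Measure Ω) [IsProbabilityMeasure ℙ]
    (X : Ω → ℝ) (hX : Measurable X) (a b : ℝ) (ha : 0 < a)
    (hbound : ∀ᵐ ω ∂ℙ, X ω ∈ Set.Icc a b)
    (κ : ℝ) (hκ : (∫ ω, Real.log (X ω) ∂ℙ) < -κ) :
    ∃ σ₀ > (0 : ℝ), ∀ σ : ℝ, 0 < σ → σ ≤ σ₀ →
      (∫ ω, (X ω) ^ σ ∂ℙ) < Real.exp (-σ * κ) := by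
  have hpos : ∀ᵐ ω ∂ℙ, 0 < X ω := by
    filter_upwards [hbound] with ω hω using ha.trans_le hω.1
  have hlog : ∀ᵐ ω ∂ℙ, log (X ω) ∈ Set.Icc (log a) (log b) := by
    filter_upwards [hbound] with ω hω
    exact ⟨log_le_log ha hω.1, log_le_log (ha.trans_le hω.1) hω.2⟩
  obtain ⟨σ₀, hσ₀, hlt⟩ :=
    ProbabilityTheory.exists_mgf_lt_exp_of_integral_lt (measurable_log.comp hX).aemeasurable hlog hκ
  refine ⟨σ₀, hσ₀, fun σ hσ hσσ₀ ↦ ?_⟩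
  rw [ProbabilityTheory.integral_rpow_eq_mgf_log hpos]
  exact hlt σ hσ hσσ₀

/-- If `a ≤ X ≤ b` almost surely with `0 < a ≤ b` and `∫ log X < -κ`, then there is
`σ₀ > 0` such that `∫ X^σ < e^{-σκ}` for all `σ ∈ (0, σ₀]`. -/
theorem stmt5 {Ω : Type*} [MeasurableSpace Ω] (ℙ : Measure Ω) [IsProbabilityMeasure ℙ]
    (X : Ω → ℝ) (hX : Measurable X) (a b : ℝ) (ha : 0 < a) (hab : a ≤ b)
    (hbound : ∀ᵐ ω ∂ℙ, X ω ∈ Set.Icc a b)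
    (κ : ℝ) (hκ : (∫ ω, Real.log (X ω) ∂ℙ) < -κ) :
    ∃ σ₀ > (0 : ℝ), ∀ σ : ℝ, 0 < σ → σ ≤ σ₀ →
      (∫ ω, (X ω) ^ σ ∂ℙ) < Real.exp (-σ * κ) :=
  stmt5_general ℙ X hX a b ha hbound κ hκ
end

section
/- Let (M, d) be a second-countable metric space equipped with a finite Borel measure m, let k ≥ 1 be an integer, and let f₁, …, f_k : M → M be Borel measurable maps, each preserving m. Let Ω = {1, …, k}^ℕ with the uniform Bernoulli probability measure ℙ, and for ω = (ω₀, ω₁, …) ∈ Ω and n ≥ 1 write f_ω^n = f_{ω_{n−1}} ∘ ⋯ ∘ f_{ω₀}. Then for (ℙ × m)-almost every (ω, x) ∈ Ω × M and every ε > 0 there exist infinitely many n ≥ 1 such that d(f_ω^n(x), x) < ε; in particular liminf_{n→∞} d(f_ω^n(x), x) = 0. -/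
open MeasureTheory

/-- The random orbit `f_ω^n(x) = f_{ω_{n-1}} ∘ ⋯ ∘ f_{ω_0} (x)` of a point `x` under the
itinerary `ω`. -/
def randomOrbit {M : Type*} {k : ℕ} (f : Fin k → M → M) (ω : ℕ → Fin k) (x : M) : ℕ → M
  | 0 => x
  | n + 1 => f (ω n) (randomOrbit f ω x n)

section aux

variable {k : ℕ}

/-- Cylinder sets in `ℕ → Fin k`. -/
def cylSets (k : ℕ) : Set (Set (ℕ → Fin k)) :=
  {C | ∃ (s : Finset ℕ) (a : ℕ → Fin k), C = {ω | ∀ n ∈ s, ω n = a n}}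

lemma isPiSystem_cylSets : IsPiSystem (cylSets k) := by
  rintro _ ⟨s, a, rfl⟩ _ ⟨t, b, rfl⟩ ⟨ω, hωa, hωb⟩
  refine ⟨s ∪ t, ω, ?_⟩
  ext ω'
  simp only [Set.mem_inter_iff, Set.mem_setOf_eq, Finset.mem_union]
  constructor
  · rintro ⟨h1, h2⟩ n (hn | hn)
    · rw [h1 n hn, hωa n hn]
    · rw [h2 n hn, hωb n hn]
  · rintro h
    exact ⟨fun n hn => (h n (Or.inl hn)).trans (hωa n hn),
      fun n hn => (h n (Or.inr hn)).trans (hωb n hn)⟩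

lemma generateFrom_cylSets (hk : 1 ≤ k) :
    MeasurableSpace.pi = MeasurableSpace.generateFrom (cylSets k) := by
  apply le_antisymm
  · refine iSup_le fun n => ?_
    have hm : @Measurable (ℕ → Fin k) (Fin k)
        (MeasurableSpace.generateFrom (cylSets k)) _ (fun ω => ω n) := by
      refine @measurable_to_countable' (Fin k) (ℕ → Fin k) _ _
        (MeasurableSpace.generateFrom (cylSets k)) _ fun i => ?_
      have : (fun ω : ℕ → Fin k => ω n) ⁻¹' {i} = {ω | ∀ m ∈ ({n} : Finset ℕ), ω m = i} := by
        ext ω; simp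
      rw [this]
      exact MeasurableSpace.measurableSet_generateFrom ⟨{n}, fun _ => i, rfl⟩
    exact hm.comap_le
  · rw [MeasurableSpace.generateFrom_le_iff]
    rintro _ ⟨s, a, rfl⟩
    have : {ω : ℕ → Fin k | ∀ n ∈ s, ω n = a n} = ⋂ n ∈ s, (fun ω : ℕ → Fin k => ω n) ⁻¹' {a n} := by
      ext ω; simp
    rw [this]
    exact MeasurableSet.biInter s.countable_toSet fun n _ =>
      (measurable_pi_apply n) (measurableSet_singleton _)

/-- The left shift on `ℕ → Fin k`. -/
def shiftMap (k : ℕ) : (ℕ → Fin k) → (ℕ → Fin k) := fun ω n => ω (n + 1)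

lemma measurable_shiftMap : Measurable (shiftMap k) :=
  measurable_pi_lambda _ fun n => measurable_pi_apply (n + 1)

lemma shiftMap_measurePreserving (hk : 1 ≤ k) (ℙ : Measure (ℕ → Fin k))
    [IsProbabilityMeasure ℙ]
    (hℙ : ∀ (s : Finset ℕ) (a : ℕ → Fin k),
      ℙ {ω | ∀ n ∈ s, ω n = a n} = ((k : ENNReal))⁻¹ ^ s.card) :
    MeasurePreserving (shiftMap k) ℙ ℙ := by
  refine ⟨measurable_shiftMap, ?_⟩
  have : IsProbabilityMeasure (ℙ.map (shiftMap k)) :=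
    Measure.isProbabilityMeasure_map measurable_shiftMap.aemeasurable
  refine ext_of_generate_finite (cylSets k) (generateFrom_cylSets hk) isPiSystem_cylSets
    ?_ (by simp)
  rintro _ ⟨s, a, rfl⟩
  rw [Measure.map_apply measurable_shiftMap]
  · have hpre : shiftMap k ⁻¹' {ω | ∀ n ∈ s, ω n = a n}
        = {ω | ∀ n ∈ s.image (· + 1), ω n = a (n - 1)} := by
      ext ω
      simp only [Set.mem_preimage, Set.mem_setOf_eq, shiftMap, Finset.mem_image]
      constructor
      · rintro h n ⟨m, hm, rfl⟩
        simpa using h m hm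
      · intro h n hn
        simpa using h (n + 1) ⟨n, hn, rfl⟩
    rw [hpre, hℙ s a, hℙ (s.image (· + 1)) (fun n => a (n - 1)),
      Finset.card_image_of_injective _ (add_left_injective 1)]
  · rw [generateFrom_cylSets hk]
    exact MeasurableSpace.measurableSet_generateFrom ⟨s, a, rfl⟩

lemma randomOrbit_iterate {M : Type*} (f : Fin k → M → M) (ω : ℕ → Fin k) (x : M) (n : ℕ) :
    (fun p : (ℕ → Fin k) × M => (shiftMap k p.1, f (p.1 0) p.2))^[n] (ω, x)
      = ((shiftMap k)^[n] ω, randomOrbit f ω x n) := by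
  induction n with
  | zero => rfl
  | succ n ih =>
      rw [Function.iterate_succ_apply', ih, Function.iterate_succ_apply']
      have : (shiftMap k)^[n] ω 0 = ω n := by
        clear ih
        induction n generalizing ω with
        | zero => rfl
        | succ n ih => rw [Function.iterate_succ_apply, ih]; rfl
      simp [randomOrbit, this]

end aux

/-- Recurrence of random orbits: if `f₁, …, f_k` preserve a finite Borel measure `m` on a
second-countable metric space `M`, and `ℙ` is the uniform Bernoulli measure on
`Ω = {1,…,k}^ℕ` (characterised by its values on cylinders), then for `(ℙ × m)`-a.e.
`(ω, x)` and every `ε > 0` there are infinitely many `n ≥ 1` with `d(f_ω^n(x), x) < ε`;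
in particular `liminf_{n→∞} d(f_ω^n(x), x) = 0`. -/
theorem stmt7 {M : Type*} [MetricSpace M] [SecondCountableTopology M]
    [MeasurableSpace M] [BorelSpace M] (m : Measure M) [IsFiniteMeasure m]
    (k : ℕ) (hk : 1 ≤ k) (f : Fin k → M → M)
    (hf : ∀ i, MeasurePreserving (f i) m m)
    (ℙ : Measure (ℕ → Fin k)) [IsProbabilityMeasure ℙ]
    (hℙ : ∀ (s : Finset ℕ) (a : ℕ → Fin k),
      ℙ {ω | ∀ n ∈ s, ω n = a n} = ((k : ENNReal))⁻¹ ^ s.card) :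
    ∀ᵐ p ∂(ℙ.prod m),
      (∀ ε > (0 : ℝ), {n : ℕ | 1 ≤ n ∧ dist (randomOrbit f p.1 p.2 n) p.2 < ε}.Infinite) ∧
      Filter.liminf (fun n => dist (randomOrbit f p.1 p.2 n) p.2) Filter.atTop = 0 := by
  classical
  set T : (ℕ → Fin k) × M → (ℕ → Fin k) × M :=
    fun p => (shiftMap k p.1, f (p.1 0) p.2) with hT
  -- the skew product preserves the product measure
  have hgm : Measurable (Function.uncurry fun ω : ℕ → Fin k => f (ω 0)) := by
    have h1 : Measurable fun p : M × Fin k => f p.2 p.1 :=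
      measurable_from_prod_countable_left fun i => (hf i).measurable
    have h2 : Measurable fun p : (ℕ → Fin k) × M => ((p.2 : M), (p.1 0 : Fin k)) :=
      measurable_snd.prodMk ((measurable_pi_apply 0).comp measurable_fst)
    exact h1.comp h2
  have hTpres : MeasurePreserving T (ℙ.prod m) (ℙ.prod m) :=
    (shiftMap_measurePreserving hk ℙ hℙ).skew_product hgm
      (Filter.Eventually.of_forall fun ω => (hf (ω 0)).map_eq)
  have hcons : Conservative T (ℙ.prod m) := hTpres.conservative
  -- recurrence to basis sets of the second coordinate
  have hB : ∀ U ∈ TopologicalSpace.countableBasis M,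
      ∀ᵐ p ∂(ℙ.prod m), p.2 ∈ U → ∃ᶠ n in Filter.atTop, randomOrbit f p.1 p.2 n ∈ U := by
    intro U hU
    have hUm : MeasurableSet U :=
      (TopologicalSpace.isOpen_of_mem_countableBasis hU).measurableSet
    have := hcons.ae_mem_imp_frequently_image_mem
      (s := (Set.univ : Set (ℕ → Fin k)) ×ˢ U) (MeasurableSet.univ.prod hUm).nullMeasurableSet
    refine this.mono fun p hp hpU => ?_
    have := hp (by simpa using hpU)
    refine this.mono fun n hn => ?_
    have hiter := randomOrbit_iterate f p.1 p.2 n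
    rw [show (p.1, p.2) = p from rfl] at hiter
    rw [hiter] at hn
    simpa using hn.2
  have hmain : ∀ᵐ p ∂(ℙ.prod m), ∀ U ∈ TopologicalSpace.countableBasis M,
      p.2 ∈ U → ∃ᶠ n in Filter.atTop, randomOrbit f p.1 p.2 n ∈ U :=
    (ae_ball_iff (TopologicalSpace.countable_countableBasis M)).2 hB
  refine hmain.mono fun p hp => ?_
  have key : ∀ ε > (0 : ℝ),
      {n : ℕ | 1 ≤ n ∧ dist (randomOrbit f p.1 p.2 n) p.2 < ε}.Infinite := by
    intro ε hε
    obtain ⟨U, hU, hpU, hUb⟩ :=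
      (TopologicalSpace.isBasis_countableBasis M).mem_nhds_iff.1
        (Metric.ball_mem_nhds p.2 hε)
    have hfreq := hp U hU hpU
    have hinf : {n : ℕ | randomOrbit f p.1 p.2 n ∈ U}.Infinite :=
      Nat.frequently_atTop_iff_infinite.1 hfreq
    refine ((hinf.diff (Set.finite_singleton 0)).mono ?_)
    rintro n ⟨hn, hn0⟩
    refine ⟨Nat.one_le_iff_ne_zero.2 hn0, ?_⟩
    exact Metric.mem_ball.1 (hUb hn)
  refine ⟨key, ?_⟩
  have hbdd : Filter.IsBoundedUnder (· ≥ ·) Filter.atTop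
      (fun n => dist (randomOrbit f p.1 p.2 n) p.2) :=
    Filter.isBoundedUnder_of ⟨0, fun n => dist_nonneg⟩
  have hle : ∀ ε > (0 : ℝ),
      Filter.liminf (fun n => dist (randomOrbit f p.1 p.2 n) p.2) Filter.atTop ≤ ε := by
    intro ε hε
    refine Filter.liminf_le_of_frequently_le ?_ hbdd
    have := Nat.frequently_atTop_iff_infinite.2 (key ε hε)
    exact this.mono fun n hn => hn.2.le
  have hfreq1 : ∃ᶠ n in Filter.atTop, dist (randomOrbit f p.1 p.2 n) p.2 ≤ 1 :=
    (Nat.frequently_atTop_iff_infinite.2 (key 1 one_pos)).mono fun n hn => hn.2.le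
  have hge : (0 : ℝ) ≤
      Filter.liminf (fun n => dist (randomOrbit f p.1 p.2 n) p.2) Filter.atTop :=
    Filter.le_liminf_of_le (Filter.IsCoboundedUnder.of_frequently_le hfreq1)
      (Filter.Eventually.of_forall fun n => dist_nonneg)
  refine le_antisymm ?_ hge
  by_contra h
  push_neg at h
  have h2 := hle _ (half_pos h)
  linarith
end

section
/- For every integer c ≥ 1, every ε > 0, and every integer K ≥ 1 there exists a finite family of closed boxes U_α = ∏_{i=1}^{c} [p_{α,i}, q_{α,i}] (α ∈ A, A finite) with −1 ≤ p_{α,i} < q_{α,i} ≤ 2 for all α and i, such that: (1) each U_α has diameter strictly less than ε; (2) the interiors of the U_α cover [0,1]^c; (3) every x ∈ [0,1]^c lies in the interiors of at least K of the boxes U_α whose frontiers are pairwise disjoint; (4) for each i ∈ {1,…,c}, the real numbers {p_{α,i} : α ∈ A} ∪ {q_{α,i} : α ∈ A} are pairwise distinct. -/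
/-!
Place `K + 1` concentric cubes at every point of the grid `(1/N)ℤ^c ∩ [0,1]^c`, the `α`-th one
of half-side `ρ α / N`, where the `ρ α` are pairwise distinct numbers in `(1/2, 1)`. Every point of
`[0,1]^c` is within `1/(2N)` of a grid point in each coordinate, hence in the interiors of the
`K + 1` cubes there, and concentric cubes of different sizes have disjoint frontiers. The endpoints
are pairwise distinct because `N` times a lower endpoint, `k - ρ α`, has fractional part
`1 - ρ α ∈ (0, 1/2)`, while `N` times an upper endpoint, `k + ρ α`, has fractional part
`ρ α ∈ (1/2, 1)`. We take `ρ α = 1 - 1/(α + 3)`.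
-/

/-- The closed box `∏ᵢ [pᵢ, qᵢ]` in `ℝ^c`. -/
def closedBox {c : ℕ} (p q : Fin c → ℝ) : Set (EuclideanSpace ℝ (Fin c)) :=
  {x | ∀ i, x i ∈ Set.Icc (p i) (q i)}

open Set

lemma disjoint_frontier_of_subset_interior {X : Type*} [TopologicalSpace X] {s t : Set X}
    (hs : IsClosed s) (hst : s ⊆ interior t) : Disjoint (frontier s) (frontier t) :=
  disjoint_interior_frontier.mono_left (hs.frontier_subset.trans hst)

section Boxes

variable {c : ℕ}

lemma closedBox_eq_preimage (p q : Fin c → ℝ) :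
    closedBox p q = PiLp.homeomorph 2 (fun _ : Fin c ↦ ℝ) ⁻¹' univ.pi fun i ↦ Icc (p i) (q i) := by
  ext x; simp only [closedBox, mem_preimage, mem_univ_pi]; rfl

lemma isClosed_closedBox (p q : Fin c → ℝ) : IsClosed (closedBox p q) := by
  rw [closedBox_eq_preimage]
  exact (isClosed_set_pi fun i _ ↦ isClosed_Icc).preimage (Homeomorph.continuous _)

lemma interior_closedBox (p q : Fin c → ℝ) :
    interior (closedBox p q) = {x | ∀ i, x i ∈ Ioo (p i) (q i)} := by
  rw [closedBox_eq_preimage, ← Homeomorph.preimage_interior, interior_pi_set finite_univ]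
  ext x; simp only [mem_ofPred_eq, mem_preimage, mem_univ_pi, interior_Icc]; rfl

lemma ediam_closedBox_le {p q : Fin c → ℝ} {d : ℝ} (hd₀ : 0 ≤ d) (hd : ∀ i, q i - p i ≤ d) :
    Metric.ediam (closedBox p q) ≤ ENNReal.ofReal (√c * d) := by
  refine Metric.ediam_le_of_forall_dist_le fun x hx y hy ↦ ?_
  have hcoord : ∀ i, dist (x i) (y i) ^ 2 ≤ d ^ 2 := fun i ↦ by
    obtain ⟨hpx, hxq⟩ := hx i
    obtain ⟨hpy, hyq⟩ := hy i
    rw [Real.dist_eq, sq_abs]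
    exact sq_le_sq' (by linarith [hd i]) (by linarith [hd i])
  calc dist x y = √(∑ i, dist (x i) (y i) ^ 2) := EuclideanSpace.dist_eq x y
    _ ≤ √(c * d ^ 2) := by
      gcongr
      simpa using Finset.sum_le_card_nsmul Finset.univ _ _ fun i _ ↦ hcoord i
    _ = √c * d := by rw [Real.sqrt_mul (Nat.cast_nonneg c), Real.sqrt_sq hd₀]

lemma mem_interior_closedBox_of_abs_sub_lt {x : EuclideanSpace ℝ (Fin c)} {m : Fin c → ℝ}
    {r : ℝ} (h : ∀ i, |x i - m i| < r) :
    x ∈ interior (closedBox (fun i ↦ m i - r) (fun i ↦ m i + r)) := by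
  rw [interior_closedBox]
  exact fun i ↦ ⟨by linarith [(abs_lt.1 (h i)).1], by linarith [(abs_lt.1 (h i)).2]⟩

lemma disjoint_frontier_closedBox_of_lt (m : Fin c → ℝ) {r s : ℝ} (hrs : r < s) :
    Disjoint (frontier (closedBox (fun i ↦ m i - r) (fun i ↦ m i + r)))
      (frontier (closedBox (fun i ↦ m i - s) (fun i ↦ m i + s))) :=
  disjoint_frontier_of_subset_interior (isClosed_closedBox _ _) fun _ hx ↦
    mem_interior_closedBox_of_abs_sub_lt fun i ↦
      (abs_sub_le_iff.2 ⟨by linarith [(hx i).2], by linarith [(hx i).1]⟩).trans_lt hrs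

end Boxes

lemma exists_fin_abs_sub_div_le {N : ℕ} (hN : 0 < N) {t : ℝ} (ht : t ∈ Icc 0 1) :
    ∃ k : Fin (N + 1), |t - k / N| ≤ 1 / 2 / N := by
  have hN' : (0 : ℝ) < N := Nat.cast_pos.2 hN
  have h₀ : 0 ≤ t * N + 1 / 2 := by nlinarith [ht.1]
  set k := ⌊t * N + 1 / 2⌋₊
  have hkN : k < N + 1 := (Nat.floor_lt h₀).2 (by push_cast; nlinarith [ht.2])
  have hk₁ : (k : ℝ) ≤ t * N + 1 / 2 := Nat.floor_le h₀
  have hk₂ : t * N + 1 / 2 < k + 1 := Nat.lt_floor_add_one _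
  have hround : |t * N - k| ≤ 1 / 2 := abs_le.2 ⟨by linarith, by linarith⟩
  refine ⟨⟨k, hkN⟩, ?_⟩
  calc |t - k / N| = |(t * N - k) / N| := by rw [sub_div, mul_div_cancel_right₀ _ hN'.ne']
    _ = |t * N - k| / N := by rw [abs_div, abs_of_pos hN']
    _ ≤ 1 / 2 / N := by gcongr

section Endpoints

variable {k l : ℕ} {ρ σ : ℝ}

lemma eq_of_natCast_sub_eq (hρ : ρ ∈ Ioo (1 / 2) 1) (hσ : σ ∈ Ioo (1 / 2) 1)
    (h : (k : ℝ) - ρ = l - σ) : ρ = σ := by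
  have hlo : (-1 : ℤ) < k - l := by exact_mod_cast (by linarith [hρ.1, hσ.2] : (-1 : ℝ) < k - l)
  have hhi : (k : ℤ) - l < 1 := by exact_mod_cast (by linarith [hρ.2, hσ.1] : (k : ℝ) - l < 1)
  have hkl : k = l := by omega
  subst hkl
  linarith

lemma eq_of_natCast_add_eq (hρ : ρ ∈ Ioo (1 / 2) 1) (hσ : σ ∈ Ioo (1 / 2) 1)
    (h : (k : ℝ) + ρ = l + σ) : ρ = σ :=
  (eq_of_natCast_sub_eq hσ hρ (by linarith : (k : ℝ) - σ = l - ρ)).symm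

lemma natCast_sub_ne_natCast_add (hρ : ρ ∈ Ioo (1 / 2) 1) (hσ : σ ∈ Ioo (1 / 2) 1) :
    (k : ℝ) - ρ ≠ l + σ := by
  intro h
  have hlo : (1 : ℤ) < k - l := by exact_mod_cast (by linarith [hρ.1, hσ.1] : (1 : ℝ) < k - l)
  have hhi : (k : ℤ) - l < 2 := by exact_mod_cast (by linarith [hρ.2, hσ.2] : (k : ℝ) - l < 2)
  omega

end Endpoints

noncomputable def halfWidth (k : ℕ) : ℝ := 1 - 1 / (k + 3)

lemma halfWidth_mem_Ioo (k : ℕ) : halfWidth k ∈ Ioo (1 / 2) 1 := by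
  have h₀ : (0 : ℝ) < 1 / (k + 3) := by positivity
  have h₁ : 1 / ((k : ℝ) + 3) ≤ 1 / 3 := one_div_le_one_div_of_le (by norm_num) (by simp)
  exact ⟨by unfold halfWidth; linarith, by unfold halfWidth; linarith⟩

lemma halfWidth_injective : Function.Injective halfWidth := by
  intro k l h
  unfold halfWidth at h
  have : (k : ℝ) + 3 = l + 3 := by simpa using h
  exact_mod_cast add_right_cancel this

section GridCubes

variable {c N : ℕ}

lemma neg_one_le_sub_lt_add_le_two (hN : 0 < N) {G : ℕ} (hG : G ≤ N) {ρ : ℝ}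
    (hρ : ρ ∈ Ioo 0 1) :
    -1 ≤ (G : ℝ) / N - ρ / N ∧ (G : ℝ) / N - ρ / N < G / N + ρ / N ∧ (G : ℝ) / N + ρ / N ≤ 2 := by
  have hN₀ : (0 : ℝ) < N := Nat.cast_pos.2 hN
  have hN₁ : (1 : ℝ) ≤ N := Nat.one_le_cast.2 hN
  have hGN : (G : ℝ) ≤ N := Nat.cast_le.2 hG
  rw [← sub_div, ← add_div, le_div_iff₀ hN₀, div_le_iff₀ hN₀, div_lt_div_iff_of_pos_right hN₀]
  refine ⟨?_, ?_, ?_⟩ <;> linarith [hρ.1, hρ.2, (Nat.cast_nonneg G : (0 : ℝ) ≤ G)]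

lemma ediam_closedBox_lt (m : Fin c → ℝ) {ε ρ : ℝ} (hε : 0 < ε) (hN : 2 * √c / ε < N)
    (hρ : ρ ∈ Ioo 0 1) :
    Metric.ediam (closedBox (fun i ↦ m i - ρ / N) (fun i ↦ m i + ρ / N)) < ENNReal.ofReal ε := by
  have hN' : (0 : ℝ) < N := (by positivity : 0 ≤ 2 * √c / ε).trans_lt hN
  have hwidth : ∀ i, (m i + ρ / N) - (m i - ρ / N) ≤ 2 * ρ / N := fun i ↦ (by ring : _ = _).le
  refine (ediam_closedBox_le (div_nonneg (by linarith [hρ.1]) hN'.le) hwidth).trans_lt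
    ((ENNReal.ofReal_lt_ofReal_iff hε).2 ?_)
  calc √c * (2 * ρ / N) ≤ 2 * √c / N := by
        rw [mul_div_assoc', div_le_div_iff_of_pos_right hN']; nlinarith [hρ.2, Real.sqrt_nonneg c]
    _ < ε := by rwa [div_lt_iff₀ hN', ← div_lt_iff₀' hε]

lemma exists_finset_nested_cubes (hN : 0 < N) {K n : ℕ}
    (e : (Fin c → Fin (N + 1)) × Fin K ≃ Fin n) {ρ : Fin n → ℝ} (hρ : Function.Injective ρ)
    (hρ' : ∀ α, 1 / 2 < ρ α) {x : EuclideanSpace ℝ (Fin c)} (hx : ∀ i, x i ∈ Icc 0 1) :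
    ∃ I : Finset (Fin n), I.card = K ∧
      (∀ α ∈ I, x ∈ interior (closedBox (fun i ↦ ((e.symm α).1 i : ℕ) / N - ρ α / N)
        (fun i ↦ ((e.symm α).1 i : ℕ) / N + ρ α / N))) ∧
      (∀ α ∈ I, ∀ β ∈ I, α ≠ β →
        Disjoint (frontier (closedBox (fun i ↦ ((e.symm α).1 i : ℕ) / N - ρ α / N)
          (fun i ↦ ((e.symm α).1 i : ℕ) / N + ρ α / N)))
          (frontier (closedBox (fun i ↦ ((e.symm β).1 i : ℕ) / N - ρ β / N)
          (fun i ↦ ((e.symm β).1 i : ℕ) / N + ρ β / N)))) := by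
  have hN' : (0 : ℝ) < N := Nat.cast_pos.2 hN
  choose G hG using fun i ↦ exists_fin_abs_sub_div_le hN (hx i)
  have hinj : Function.Injective fun j ↦ e (G, j) := fun j j' h ↦ by simpa using e.injective h
  refine ⟨Finset.univ.map ⟨_, hinj⟩, by simp, ?_, ?_⟩
  · simp only [Finset.mem_map, Finset.mem_univ, true_and, Function.Embedding.coeFn_mk]
    rintro _ ⟨j, rfl⟩
    simp only [Equiv.symm_apply_apply]
    exact mem_interior_closedBox_of_abs_sub_lt fun i ↦
      (hG i).trans_lt (div_lt_div_of_pos_right (hρ' _) hN')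
  · simp only [Finset.mem_map, Finset.mem_univ, true_and, Function.Embedding.coeFn_mk]
    rintro _ ⟨j, rfl⟩ _ ⟨j', rfl⟩ hne
    simp only [Equiv.symm_apply_apply]
    rcases (hρ.ne hne).lt_or_gt with h | h
    · exact disjoint_frontier_closedBox_of_lt _ (div_lt_div_of_pos_right h hN')
    · exact (disjoint_frontier_closedBox_of_lt _ (div_lt_div_of_pos_right h hN')).symm

lemma grid_endpoints_ne (hN : N ≠ 0) {n : ℕ} (g : Fin n → ℕ) {ρ : Fin n → ℝ}
    (hρ : Function.Injective ρ) (hρ' : ∀ α, ρ α ∈ Ioo (1 / 2) 1) (α β : Fin n) :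
    (α ≠ β → (g α : ℝ) / N - ρ α / N ≠ g β / N - ρ β / N ∧
        (g α : ℝ) / N + ρ α / N ≠ g β / N + ρ β / N) ∧
      (g α : ℝ) / N - ρ α / N ≠ g β / N + ρ β / N := by
  simp only [← sub_div, ← add_div, ne_eq, div_left_inj' (Nat.cast_ne_zero.2 hN : (N : ℝ) ≠ 0)]
  exact ⟨fun hαβ ↦ ⟨fun h ↦ hαβ (hρ (eq_of_natCast_sub_eq (hρ' α) (hρ' β) h)),
    fun h ↦ hαβ (hρ (eq_of_natCast_add_eq (hρ' α) (hρ' β) h))⟩,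
    natCast_sub_ne_natCast_add (hρ' α) (hρ' β)⟩

end GridCubes

theorem stmt8_general (c : ℕ) (ε : ℝ) (hε : 0 < ε) (K : ℕ) :
    ∃ (n : ℕ) (p q : Fin n → Fin c → ℝ),
      (∀ α i, -1 ≤ p α i ∧ p α i < q α i ∧ q α i ≤ 2) ∧
      (∀ α, EMetric.diam (closedBox (p α) (q α)) < ENNReal.ofReal ε) ∧
      (∀ x : EuclideanSpace ℝ (Fin c), (∀ i, x i ∈ Set.Icc (0 : ℝ) 1) →
        ∃ α, x ∈ interior (closedBox (p α) (q α))) ∧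
      (∀ x : EuclideanSpace ℝ (Fin c), (∀ i, x i ∈ Set.Icc (0 : ℝ) 1) →
        ∃ I : Finset (Fin n), K ≤ I.card ∧
          (∀ α ∈ I, x ∈ interior (closedBox (p α) (q α))) ∧
          (∀ α ∈ I, ∀ β ∈ I, α ≠ β →
            Disjoint (frontier (closedBox (p α) (q α))) (frontier (closedBox (p β) (q β))))) ∧
      (∀ i : Fin c, ∀ α β : Fin n,
        (α ≠ β → p α i ≠ p β i ∧ q α i ≠ q β i) ∧ p α i ≠ q β i) := by
  obtain ⟨N, hN⟩ := exists_nat_gt (2 * √c / ε)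
  have hN₀ : 0 < N := Nat.cast_pos.1 ((by positivity : 0 ≤ 2 * √c / ε).trans_lt hN)
  obtain ⟨n, ⟨e⟩⟩ : ∃ n, Nonempty ((Fin c → Fin (N + 1)) × Fin (K + 1) ≃ Fin n) :=
    ⟨_, ⟨Fintype.equivFin _⟩⟩
  let ρ : Fin n → ℝ := fun α ↦ halfWidth α
  have hρ : Function.Injective ρ := halfWidth_injective.comp Fin.val_injective
  have hρ' : ∀ α, ρ α ∈ Ioo (1 / 2) 1 := fun α ↦ halfWidth_mem_Ioo α
  refine ⟨_, fun α i ↦ ((e.symm α).1 i : ℕ) / N - ρ α / N,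
    fun α i ↦ ((e.symm α).1 i : ℕ) / N + ρ α / N, fun α i ↦ ?_, fun α ↦ ?_, fun x hx ↦ ?_,
    fun x hx ↦ ?_, fun i ↦ grid_endpoints_ne hN₀.ne' (fun α ↦ (e.symm α).1 i) hρ hρ'⟩
  · exact neg_one_le_sub_lt_add_le_two hN₀ (Fin.is_le _)
      (Ioo_subset_Ioo_left (by norm_num) (hρ' α))
  · exact ediam_closedBox_lt _ hε hN (Ioo_subset_Ioo_left (by norm_num) (hρ' α))
  · obtain ⟨I, hI, hmem, -⟩ := exists_finset_nested_cubes hN₀ e hρ (fun α ↦ (hρ' α).1) hx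
    obtain ⟨α, hα⟩ := I.card_pos.1 (by omega)
    exact ⟨α, hmem α hα⟩
  · obtain ⟨I, hI, hmem, hdisj⟩ := exists_finset_nested_cubes hN₀ e hρ (fun α ↦ (hρ' α).1) hx
    exact ⟨I, by omega, hmem, hdisj⟩

/-- For every `c ≥ 1`, `ε > 0` and `K ≥ 1` there is a finite family of closed boxes
`U_α = ∏ᵢ [p_{α,i}, q_{α,i}] ⊆ [-1,2]^c` of diameter `< ε` whose interiors cover
`[0,1]^c`, such that every point of `[0,1]^c` lies in the interiors of at least `K`
boxes with pairwise disjoint frontiers, and such that for each coordinate `i` all the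
endpoints `p_{α,i}, q_{α,i}` are pairwise distinct. -/
theorem stmt8 (c : ℕ) (hc : 1 ≤ c) (ε : ℝ) (hε : 0 < ε) (K : ℕ) (hK : 1 ≤ K) :
    ∃ (n : ℕ) (p q : Fin n → Fin c → ℝ),
      (∀ α i, -1 ≤ p α i ∧ p α i < q α i ∧ q α i ≤ 2) ∧
      (∀ α, EMetric.diam (closedBox (p α) (q α)) < ENNReal.ofReal ε) ∧
      (∀ x : EuclideanSpace ℝ (Fin c), (∀ i, x i ∈ Set.Icc (0 : ℝ) 1) →
        ∃ α, x ∈ interior (closedBox (p α) (q α))) ∧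
      (∀ x : EuclideanSpace ℝ (Fin c), (∀ i, x i ∈ Set.Icc (0 : ℝ) 1) →
        ∃ I : Finset (Fin n), K ≤ I.card ∧
          (∀ α ∈ I, x ∈ interior (closedBox (p α) (q α))) ∧
          (∀ α ∈ I, ∀ β ∈ I, α ≠ β →
            Disjoint (frontier (closedBox (p α) (q α))) (frontier (closedBox (p β) (q β))))) ∧
      (∀ i : Fin c, ∀ α β : Fin n,
        (α ≠ β → p α i ≠ p β i ∧ q α i ≠ q β i) ∧ p α i ≠ q β i) :=
  stmt8_general c ε hε K
end
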